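/- The S plurality solution R^SP satisfies neutrality (NT), all indifference all winners (AIAW), independence of the addition of the worst sets (IAWS), and independence of the decomposition of the worst sets (IDWS), but does not satisfy concatenation consistency (CCON). -/
import Mathlib


namespace SocRank

/-- A coalitional ranking (a weak order on a set of feasible nonempty coalitions),
represented by its list of equivalence classes, listed from best to worst. -/
structure CoalRanking (X : Type*) where
  classes : List (Finset (Finset X))
  class_nonempty : ∀ C ∈ classes, C.Nonempty
  coal_nonempty : ∀ C ∈ classes, ∀ S ∈ C, S.Nonempty
  classes_disjoint : classes.Pairwise Disjoint

namespace CoalRanking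

variable {X : Type*}

/-- The coalition domain `𝒟(≿)` of a coalitional ranking. -/
def domain [DecidableEq X] (r : CoalRanking X) : Finset (Finset X) :=
  r.classes.foldr (· ∪ ·) ∅

/-- The list of equivalence classes of the restriction of a ranking to a set `D`
of coalitions. -/
def restrictClasses [DecidableEq X] (r : CoalRanking X) (D : Finset (Finset X)) :
    List (Finset (Finset X)) :=
  (r.classes.map (· ∩ D)).filter (fun C => decide C.Nonempty)

/-- Merging two lists of equivalence classes by aligning them at the top. -/
def zipUnion [DecidableEq X] :
    List (Finset (Finset X)) → List (Finset (Finset X)) → List (Finset (Finset X))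
  | [], M => M
  | L, [] => L
  | A :: L, B :: M => (A ∪ B) :: zipUnion L M

/-- `r` is a sum of the disjoint rankings `r₁` and `r₂`: its domain is the union of
the two domains and its restriction to the domain of `rᵢ` is `rᵢ`. -/
def IsSum [DecidableEq X] (r r₁ r₂ : CoalRanking X) : Prop :=
  Disjoint r₁.domain r₂.domain ∧
  r.domain = r₁.domain ∪ r₂.domain ∧
  r.restrictClasses r₁.domain = r₁.classes ∧
  r.restrictClasses r₂.domain = r₂.classes

/-- `r` is the concatenation sum `r₁ · r₂` of the disjoint rankings `r₁` and `r₂`. -/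
def IsConcatSum [DecidableEq X] (r r₁ r₂ : CoalRanking X) : Prop :=
  Disjoint r₁.domain r₂.domain ∧ r.classes = r₁.classes ++ r₂.classes

/-- `r` is the top-aligned sum `r₁ ⊨ r₂` of the disjoint rankings `r₁` and `r₂`. -/
def IsTopAlignedSum [DecidableEq X] (r r₁ r₂ : CoalRanking X) : Prop :=
  Disjoint r₁.domain r₂.domain ∧ r.classes = zipUnion r₁.classes r₂.classes

/-- `r` is the bottom-aligned sum `r₁ ⫤ r₂` of the disjoint rankings `r₁` and `r₂`. -/
def IsBottomAlignedSum [DecidableEq X] (r r₁ r₂ : CoalRanking X) : Prop :=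
  Disjoint r₁.domain r₂.domain ∧
  r.classes = (zipUnion r₁.classes.reverse r₂.classes.reverse).reverse

/-- Renaming the individuals of a coalitional ranking by a permutation `σ` of `X`:
the ranking `≿^σ`. -/
def mapPerm [DecidableEq X] (σ : Equiv.Perm X) (r : CoalRanking X) : CoalRanking X where
  classes := r.classes.map (fun C => C.image (fun S => S.image σ))
  class_nonempty := by
    intro C hC
    simp only [List.mem_map] at hC
    obtain ⟨C₀, hC₀, rfl⟩ := hC
    exact (r.class_nonempty C₀ hC₀).image _
  coal_nonempty := by
    intro C hC S hS
    simp only [List.mem_map] at hC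
    obtain ⟨C₀, hC₀, rfl⟩ := hC
    simp only [Finset.mem_image] at hS
    obtain ⟨S₀, hS₀, rfl⟩ := hS
    exact (r.coal_nonempty C₀ hC₀ S₀ hS₀).image _
  classes_disjoint := by
    refine List.Pairwise.map _ (fun {A B} h => ?_) r.classes_disjoint
    exact (Finset.disjoint_image
      (Finset.image_injective σ.injective)).mpr h

/-- Renaming the coalitions of a coalitional ranking by a permutation `π` of the set of
coalitions (mapping nonempty sets to nonempty sets): the ranking `≿_π`. -/
def mapCoalPerm [DecidableEq X] (π : Equiv.Perm (Finset X))
    (hπ : ∀ S : Finset X, S.Nonempty → (π S).Nonempty) (r : CoalRanking X) :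
    CoalRanking X where
  classes := r.classes.map (fun C => C.image π)
  class_nonempty := by
    intro C hC
    simp only [List.mem_map] at hC
    obtain ⟨C₀, hC₀, rfl⟩ := hC
    exact (r.class_nonempty C₀ hC₀).image _
  coal_nonempty := by
    intro C hC S hS
    simp only [List.mem_map] at hC
    obtain ⟨C₀, hC₀, rfl⟩ := hC
    simp only [Finset.mem_image] at hS
    obtain ⟨S₀, hS₀, rfl⟩ := hS
    exact hπ S₀ (r.coal_nonempty C₀ hC₀ S₀ hS₀)
  classes_disjoint := by
    refine List.Pairwise.map _ (fun {A B} h => ?_) r.classes_disjoint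
    exact (Finset.disjoint_image π.injective).mpr h

end CoalRanking

open CoalRanking

variable {X : Type*}

/-- A social ranking solution: a map assigning to every coalitional ranking a binary
relation on the individuals. -/
abbrev SRSMap (X : Type*) := CoalRanking X → X → X → Prop

/-- The symmetric part `I` of the social ranking. -/
def Ind (R : SRSMap X) (r : CoalRanking X) (x y : X) : Prop := R r x y ∧ R r y x

/-- The asymmetric part `P` of the social ranking. -/
def Pref (R : SRSMap X) (r : CoalRanking X) (x y : X) : Prop := R r x y ∧ ¬ R r y x

/-- Conditions (1)-(4) of consistency for the triple `(r₁, r₂, r)`. -/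
def ConsistentAt (R : SRSMap X) (r₁ r₂ r : CoalRanking X) : Prop :=
  ∀ x y : X,
    (Ind R r₁ x y → Ind R r₂ x y → Ind R r x y) ∧
    (Ind R r₁ x y → Pref R r₂ x y → Pref R r x y) ∧
    (Pref R r₁ x y → Ind R r₂ x y → Pref R r x y) ∧
    (Pref R r₁ x y → Pref R r₂ x y → Pref R r x y)

/-- Consistency (CON). -/
def CON [DecidableEq X] (R : SRSMap X) : Prop :=
  ∀ r₁ r₂ r : CoalRanking X, IsSum r r₁ r₂ → ConsistentAt R r₁ r₂ r

/-- Concatenation consistency (CCON). -/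
def CCON [DecidableEq X] (R : SRSMap X) : Prop :=
  ∀ r₁ r₂ r : CoalRanking X, IsConcatSum r r₁ r₂ → ConsistentAt R r₁ r₂ r

/-- Top-aligned consistency (TCON). -/
def TCON [DecidableEq X] (R : SRSMap X) : Prop :=
  ∀ r₁ r₂ r : CoalRanking X, IsTopAlignedSum r r₁ r₂ → ConsistentAt R r₁ r₂ r

/-- Bottom-aligned consistency (BCON). -/
def BCON [DecidableEq X] (R : SRSMap X) : Prop :=
  ∀ r₁ r₂ r : CoalRanking X, IsBottomAlignedSum r r₁ r₂ → ConsistentAt R r₁ r₂ r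

/-- II-concatenation consistency. -/
def IICCON [DecidableEq X] (R : SRSMap X) : Prop :=
  ∀ r₁ r₂ r : CoalRanking X, IsConcatSum r r₁ r₂ →
    ∀ x y : X, Ind R r₁ x y → Ind R r₂ x y → Ind R r x y

/-- IP-concatenation consistency. -/
def IPCCON [DecidableEq X] (R : SRSMap X) : Prop :=
  ∀ r₁ r₂ r : CoalRanking X, IsConcatSum r r₁ r₂ →
    ∀ x y : X, Ind R r₁ x y → Pref R r₂ x y → Pref R r x y

/-- PI-concatenation consistency. -/
def PICCON [DecidableEq X] (R : SRSMap X) : Prop :=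
  ∀ r₁ r₂ r : CoalRanking X, IsConcatSum r r₁ r₂ →
    ∀ x y : X, Pref R r₁ x y → Ind R r₂ x y → Pref R r x y

/-- PP-concatenation consistency. -/
def PPCCON [DecidableEq X] (R : SRSMap X) : Prop :=
  ∀ r₁ r₂ r : CoalRanking X, IsConcatSum r r₁ r₂ →
    ∀ x y : X, Pref R r₁ x y → Pref R r₂ x y → Pref R r x y

/-- `x_k`: the number of coalitions of the class `C` containing `x`. -/
def cnt [DecidableEq X] (x : X) (C : Finset (Finset X)) : ℕ :=
  (C.filter (fun S => x ∈ S)).card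

/-- The vector `θ_≿(x) = (x₁, …, x_l)`. -/
def theta [DecidableEq X] (r : CoalRanking X) (x : X) : List ℕ :=
  r.classes.map (cnt x)

/-- `sign`: `1` on positive numbers, `0` otherwise. -/
def sgn (n : ℕ) : ℕ := if 0 < n then 1 else 0

/-- The vector `θ̇_≿(x) = (sign(x₁), …, sign(x_l))`. -/
def thetaDot [DecidableEq X] (r : CoalRanking X) (x : X) : List ℕ :=
  (theta r x).map sgn

/-- The lexicographic order `≥^L` on vectors (of equal length). -/
def lexGE : List ℕ → List ℕ → Prop
  | _, [] => True
  | [], _ :: _ => False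
  | a :: as, b :: bs => b < a ∨ (a = b ∧ lexGE as bs)

/-- The lexicographic excellence solution (lex-cel) `R^L`. -/
def lexcel [DecidableEq X] : SRSMap X := fun r x y => lexGE (theta r x) (theta r y)

/-- The sign lexicographic excellence solution (S lex-cel) `R^{SL}`. -/
def slexcel [DecidableEq X] : SRSMap X := fun r x y => lexGE (thetaDot r x) (thetaDot r y)

/-- The plurality solution `R^P`. -/
def plurality [DecidableEq X] : SRSMap X := fun r x y =>
  (theta r y).headD 0 ≤ (theta r x).headD 0

/-- The sign plurality solution `R^{SP}`. -/
def splurality [DecidableEq X] : SRSMap X := fun r x y =>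
  sgn ((theta r y).headD 0) ≤ sgn ((theta r x).headD 0)

/-- The anti-plurality solution `R^{AP}`. -/
def antiplurality [DecidableEq X] : SRSMap X := fun r x y =>
  (theta r x).getLastD 0 ≤ (theta r y).getLastD 0

/-- `e_≿(x)`: the largest `k` such that `x` belongs to every coalition of each of the
first `k` equivalence classes. -/
def eIIS [DecidableEq X] (r : CoalRanking X) (x : X) : ℕ :=
  (r.classes.takeWhile (fun C => decide (∀ S ∈ C, x ∈ S))).length

/-- The intersection initial segment solution (IIS) `R^{IIS}`. -/
def iis [DecidableEq X] : SRSMap X := fun r x y => eIIS r y ≤ eIIS r x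

/-- The index of the equivalence class a coalition belongs to. -/
def classIdx [DecidableEq X] (r : CoalRanking X) (S : Finset X) : ℕ :=
  r.classes.findIdx (fun C => decide (S ∈ C))

/-- `C_{xy}`: the number of CP comparisons in favour of `x` against `y`. -/
def cpCount [DecidableEq X] [Fintype X] (r : CoalRanking X) (x y : X) : ℕ :=
  ((Finset.univ : Finset (Finset X)).filter (fun S =>
    S.Nonempty ∧ x ∉ S ∧ y ∉ S ∧ insert x S ∈ r.domain ∧ insert y S ∈ r.domain ∧
    classIdx r (insert x S) < classIdx r (insert y S))).card

/-- The Ceteris Paribus majority solution `R^{CPM}`. -/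
def cpm [DecidableEq X] [Fintype X] : SRSMap X := fun r x y =>
  cpCount r y x ≤ cpCount r x y

/-- Neutrality (NT). -/
def NT [DecidableEq X] (R : SRSMap X) : Prop :=
  ∀ (σ : Equiv.Perm X) (r : CoalRanking X) (x y : X),
    R (r.mapPerm σ) (σ x) (σ y) ↔ R r x y

/-- Weak coalitional anonymity (WCA). -/
def WCA [DecidableEq X] (R : SRSMap X) : Prop :=
  ∀ (x y : X) (π : Equiv.Perm (Finset X))
    (hπ : ∀ S : Finset X, S.Nonempty → (π S).Nonempty),
    (∀ S : Finset X, x ∈ S → x ∈ π S) → (∀ S : Finset X, y ∈ S → y ∈ π S) →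
    ∀ r : CoalRanking X,
      (R (r.mapCoalPerm π hπ) x y ↔ R r x y) ∧ (R (r.mapCoalPerm π hπ) y x ↔ R r y x)

/-- The weak union very important person property (WUVIP). -/
def WUVIP (R : SRSMap X) : Prop :=
  ∀ (r : CoalRanking X) (A B : Finset (Finset X)), r.classes = [A, B] →
    ∀ x y : X, (∃ S ∈ A, x ∈ S) → (∀ S ∈ A, y ∉ S) → Pref R r x y

/-- All indifference all winners (AIAW). -/
def AIAW [DecidableEq X] (R : SRSMap X) : Prop :=
  ∀ r : CoalRanking X, r.classes.length ≤ 1 →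
    (∀ x y : X, (∃ S ∈ r.domain, x ∈ S) → (∃ S ∈ r.domain, y ∈ S) → Ind R r x y) ∧
    (∀ x z : X, (∃ S ∈ r.domain, x ∈ S) → (∀ S ∈ r.domain, z ∉ S) → Pref R r x z)

/-- Independence of the decomposition of the worst sets (IDWS). -/
def IDWS [DecidableEq X] (R : SRSMap X) : Prop :=
  ∀ (r r' : CoalRanking X) (L G : List (Finset (Finset X))) (W : Finset (Finset X)),
    L ≠ [] → r.classes = L ++ [W] → r'.classes = L ++ G →
    G.foldr (· ∪ ·) ∅ = W →
    ∀ x y : X, Pref R r x y → Pref R r' x y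

/-- Independence of the addition of the worst sets (IAWS). -/
def IAWS [DecidableEq X] (R : SRSMap X) : Prop :=
  ∀ (r r' : CoalRanking X) (G : Finset (Finset X)),
    r'.classes = r.classes ++ [G] → (∀ S ∈ G, S ∉ r.domain) →
    ∀ x y : X, Pref R r x y → Pref R r' x y

/-- Tops-only (TO). -/
def TO (R : SRSMap X) : Prop :=
  ∀ (r r' : CoalRanking X) (A : Finset (Finset X)),
    r.classes.head? = some A → r'.classes.head? = some A → R r = R r'

/-- The dual S lex-cel `R^{DSL}`. -/
def dslexcel [DecidableEq X] : SRSMap X := fun r x y =>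
  lexGE ((thetaDot r y).reverse) ((thetaDot r x).reverse)

/-- The inverse dual S lex-cel `R^{IDSL}`. -/
def idslexcel [DecidableEq X] : SRSMap X := fun r x y => dslexcel r y x

/-- The vector `θ̃_≿(x)` used by the S lex-cel with precedence on unanimity. -/
def tildeTheta [DecidableEq X] (r : CoalRanking X) (x : X) : List ℕ :=
  r.classes.map (fun C => if cnt x C = C.card then 2 else if 0 < cnt x C then 1 else 0)

/-- The S lex-cel with a particular precedence on unanimity `R^{SLUN}`. -/
def slun [DecidableEq X] : SRSMap X := fun r x y =>
  lexGE (tildeTheta r x) (tildeTheta r y)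

/-- The S sum score `Σ_k sign(x_k)`. -/
def ssum [DecidableEq X] (r : CoalRanking X) (x : X) : ℕ := (thetaDot r x).sum

/-- The S sum rule with tie-breaking by S lex-cel `R^{SSUM,SL}`. -/
def ssumSL [DecidableEq X] : SRSMap X := fun r x y =>
  ssum r y < ssum r x ∨ (ssum r x = ssum r y ∧ slexcel r x y)

end SocRank

open SocRank

section Helpers

open SocRank CoalRanking

variable {X : Type*} [DecidableEq X]

lemma theta_headD (r : CoalRanking X) (x : X) :
    (theta r x).headD 0 = cnt x (r.classes.headD ∅) := by
  cases h : r.classes with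
  | nil => simp [theta, h, cnt]
  | cons C L => simp [theta, h]

lemma splurality_iff (r : CoalRanking X) (x y : X) :
    splurality r x y ↔ sgn (cnt y (r.classes.headD ∅)) ≤ sgn (cnt x (r.classes.headD ∅)) := by
  rw [splurality, theta_headD, theta_headD]

lemma cnt_mapPerm (σ : Equiv.Perm X) (x : X) (C : Finset (Finset X)) :
    cnt (σ x) (C.image (fun S => S.image σ)) = cnt x C := by
  unfold cnt
  rw [Finset.filter_image,
    Finset.card_image_of_injective _ (Finset.image_injective σ.injective)]
  congr 1
  apply Finset.filter_congr
  intro S _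
  simp [Finset.mem_image, σ.injective.eq_iff]

end Helpers

lemma SocRank.cnt_pos {X : Type*} [DecidableEq X] {x : X} {C : Finset (Finset X)} :
    0 < cnt x C ↔ ∃ S ∈ C, x ∈ S := by
  simp [cnt, Finset.card_pos, Finset.filter_nonempty_iff]

/-- S plurality satisfies NT, AIAW, IAWS and IDWS, but not CCON. -/
theorem splurality_axioms {X : Type*} [DecidableEq X] [Fintype X]
    (hX : 3 ≤ Fintype.card X) :
    NT (splurality : SRSMap X) ∧ AIAW (splurality : SRSMap X) ∧
      IAWS (splurality : SRSMap X) ∧ IDWS (splurality : SRSMap X) ∧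
      ¬ CCON (splurality : SRSMap X) := by
  obtain ⟨a, b, hab⟩ := Fintype.exists_pair_of_one_lt_card (by omega) (α := X)
  refine ⟨?_, ?_, ?_, ?_, ?_⟩
  · -- NT
    intro σ r x y
    rw [splurality_iff, splurality_iff]
    have h : (r.mapPerm σ).classes.headD ∅
        = (r.classes.headD ∅).image (fun S => S.image σ) := by
      cases h : r.classes <;> simp [CoalRanking.mapPerm, h]
    rw [h, cnt_mapPerm, cnt_mapPerm]
  · -- AIAW
    intro r hlen
    have hcases : r.classes = [] ∨ ∃ C, r.classes = [C] := by
      cases h : r.classes with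
      | nil => exact Or.inl rfl
      | cons C L =>
        right
        refine ⟨C, ?_⟩
        rw [h] at hlen
        cases L with
        | nil => rfl
        | cons D M => simp at hlen
    rcases hcases with h | ⟨C, h⟩
    · have hd : r.domain = ∅ := by rw [CoalRanking.domain, h]; rfl
      constructor
      · intro x y hx _; rw [hd] at hx; simp at hx
      · intro x z hx _; rw [hd] at hx; simp at hx
    · have hd : r.domain = C := by rw [CoalRanking.domain, h]; simp
      constructor
      · intro x y hx hy
        rw [hd] at hx hy
        have hx' : 0 < cnt x C := cnt_pos.mpr hx
        have hy' : 0 < cnt y C := cnt_pos.mpr hy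
        constructor <;>
          (rw [splurality_iff, h]; simp [sgn, hx', hy'])
      · intro x z hx hz
        rw [hd] at hx hz
        have hx' : 0 < cnt x C := cnt_pos.mpr hx
        have hz' : cnt z C = 0 := by
          by_contra hc
          obtain ⟨S, hS, hzS⟩ := cnt_pos.mp (Nat.pos_of_ne_zero hc)
          exact hz S hS hzS
        constructor
        · rw [splurality_iff, h]; simp [sgn, hx', hz']
        · rw [splurality_iff, h]; simp [sgn, hx', hz']
  · -- IAWS
    intro r r' G hcl _ x y hp
    cases h : r.classes with
    | nil =>
      exfalso
      exact hp.2 (by rw [splurality_iff, h]; simp [cnt])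
    | cons C L =>
      have hh : r'.classes.headD ∅ = r.classes.headD ∅ := by
        rw [hcl, h]; simp
      exact ⟨by rw [splurality_iff, hh, ← splurality_iff]; exact hp.1,
        by rw [splurality_iff, hh, ← splurality_iff]; exact hp.2⟩
  · -- IDWS
    intro r r' L G W hL hr hr' _ x y hp
    cases hLc : L with
    | nil => exact absurd hLc hL
    | cons C L' =>
      have hh : r'.classes.headD ∅ = r.classes.headD ∅ := by
        rw [hr, hr', hLc]; simp
      exact ⟨by rw [splurality_iff, hh, ← splurality_iff]; exact hp.1,
        by rw [splurality_iff, hh, ← splurality_iff]; exact hp.2⟩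
  · -- ¬ CCON
    intro hC
    have haS1 : a ∈ ({a, b} : Finset X) := by simp
    have hbS1 : b ∈ ({a, b} : Finset X) := by simp
    have hbS2 : b ∉ ({a} : Finset X) := by simp [hab.symm]
    have hS : ({a, b} : Finset X) ≠ {a} := fun h => hbS2 (h ▸ hbS1)
    let r₁ : CoalRanking X :=
      ⟨[{({a, b} : Finset X)}], by simp, by
        intro C hC S hS
        simp only [List.mem_singleton] at hC
        subst hC
        rw [Finset.mem_singleton] at hS
        subst hS
        exact ⟨a, haS1⟩, by simp⟩
    let r₂ : CoalRanking X :=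
      ⟨[{({a} : Finset X)}], by simp, by
        intro C hC S hS
        simp only [List.mem_singleton] at hC
        subst hC
        rw [Finset.mem_singleton] at hS
        subst hS
        exact ⟨a, by simp⟩, by simp⟩
    let r : CoalRanking X :=
      ⟨[{({a, b} : Finset X)}, {({a} : Finset X)}], by
        intro C hC; simp at hC
        rcases hC with rfl | rfl <;> simp, by
        intro C hC S hS
        simp at hC
        rcases hC with rfl | rfl <;> simp at hS <;> subst hS
        · exact ⟨a, haS1⟩
        · exact ⟨a, by simp⟩, by
        simp [Finset.disjoint_singleton, hS]⟩
    have hdom1 : r₁.domain = {({a, b} : Finset X)} := by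
      simp [CoalRanking.domain, r₁]
    have hdom2 : r₂.domain = {({a} : Finset X)} := by
      simp [CoalRanking.domain, r₂]
    have hsum : CoalRanking.IsConcatSum r r₁ r₂ := by
      constructor
      · rw [hdom1, hdom2]
        exact Finset.disjoint_singleton.mpr hS
      · rfl
    have hcnt : ∀ (x : X) (S : Finset X), cnt x ({S} : Finset (Finset X))
        = if x ∈ S then 1 else 0 := by
      intro x S
      simp [cnt, Finset.filter_singleton]
      split <;> simp
    have hind : Ind splurality r₁ a b := by
      constructor <;>
        (rw [splurality_iff]; simp [r₁, hcnt, haS1, hbS1])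
    have hpref : Pref splurality r₂ a b := by
      constructor
      · rw [splurality_iff]; simp [r₂, hcnt, hbS2, sgn]
      · rw [splurality_iff]; simp [r₂, hcnt, hbS2, sgn]
    have := ((hC r₁ r₂ r hsum a b).2.1 hind hpref).2
    apply this
    rw [splurality_iff]
    simp [r, hcnt, haS1, hbS1]
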